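/- For every positive integer t ≥ 2 and integer n with n > t, s(Z_n, t) ≥ ⌊log_t(n-1)⌋. -/

import Mathlib

/-- `S` is a `t`-free set in the additive abelian group `G`: whenever a sum of `k`
elements of `S` equals a sum of `l` elements of `S` with `k + l ≤ t`, the two
multisets of terms coincide (in particular `k = l`). -/
def IsTFreeSet {G : Type*} [AddCommGroup G] (t : ℕ) (S : Set G) : Prop :=
  ∀ A B : Multiset G, (∀ x ∈ A, x ∈ S) → (∀ x ∈ B, x ∈ S) →
    Multiset.card A + Multiset.card B ≤ t → A.sum = B.sum → A = B

/-- `sFree n t` is the maximum cardinality of a `t`-free set in `ZMod n`. -/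
noncomputable def sFree (n t : ℕ) : ℕ :=
  sSup {m | ∃ S : Finset (ZMod n), IsTFreeSet t (↑S : Set (ZMod n)) ∧ S.card = m}

/-!
The powers `1, t, …, t ^ (k - 1)` with `t ^ k < n`, e.g. `k = ⌊log_t (n - 1)⌋`, are distinct
and form a `t`-free set in `ZMod n`. A sum of at most `t` of them is at most `t ^ k < n`, so an
equality of two such sums in `ZMod n` already holds in `ℕ`. If one side is empty the other must be
too; otherwise each side has fewer than `t` terms, so the multiplicities of the powers are base-`t`
digits and uniqueness of base-`t` expansions forces the two sides to agree.
-/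

open Finset

theorem Nat.ofDigits_map_range (b k : ℕ) (f : ℕ → ℕ) :
    Nat.ofDigits b ((List.range k).map f) = ∑ i ∈ range k, f i * b ^ i := by
  induction k with
  | zero => simp
  | succ k ih =>
    rw [List.range_succ, List.map_append, Nat.ofDigits_append, ih, sum_range_succ]
    simp [mul_comm]

theorem Nat.eq_of_sum_range_mul_pow_eq {b k : ℕ} (hb : 1 < b) {f g : ℕ → ℕ}
    (hf : ∀ i < k, f i < b) (hg : ∀ i < k, g i < b)
    (h : ∑ i ∈ range k, f i * b ^ i = ∑ i ∈ range k, g i * b ^ i) :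
    ∀ i < k, f i = g i := by
  have := Nat.ofDigits_inj_of_len_eq (L1 := (List.range k).map f) (L2 := (List.range k).map g) hb
    (by simp) (by simpa using hf) (by simpa using hg)
    (by rwa [Nat.ofDigits_map_range, Nat.ofDigits_map_range])
  simpa [List.map_inj_left] using this

namespace Multiset

theorem sum_map_pow_eq_sum_count_mul_pow {b k : ℕ} {E : Multiset ℕ} (hE : ∀ e ∈ E, e < k) :
    (E.map (b ^ ·)).sum = ∑ i ∈ Finset.range k, E.count i * b ^ i := by
  induction E using Multiset.induction_on with
  | empty => simp
  | cons a E ih =>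
    have ha : a ∈ Finset.range k := Finset.mem_range.2 (hE a (mem_cons_self a E))
    simp [count_cons, add_mul, Finset.sum_add_distrib, ih fun e he => hE e (mem_cons_of_mem he), ha,
      add_comm]

theorem sum_map_pow_le_pow {b k : ℕ} (hb : 0 < b) {E : Multiset ℕ} (hE : ∀ e ∈ E, e < k)
    (hcard : card E ≤ b) : (E.map (b ^ ·)).sum ≤ b ^ k := by
  refine Nat.le_of_mul_le_mul_left ?_ hb
  calc b * (E.map (b ^ ·)).sum = (E.map (b ^ · * b)).sum := by
        rw [← sum_map_mul_left]; simp [mul_comm]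
    _ ≤ card E • b ^ k := by
        rw [← card_map (b ^ · * b) E]
        refine sum_le_card_nsmul _ _ fun x hx => ?_
        obtain ⟨e, he, rfl⟩ := mem_map.1 hx
        exact (pow_succ b e).symm.trans_le (Nat.pow_le_pow_right hb (hE e he))
    _ ≤ b * b ^ k := by rw [smul_eq_mul]; exact Nat.mul_le_mul_right _ hcard

theorem eq_zero_of_sum_map_pow_eq_zero {b : ℕ} (hb : 0 < b) {E : Multiset ℕ}
    (h : (E.map (b ^ ·)).sum = 0) : E = 0 :=
  eq_zero_of_forall_notMem fun e he =>
    (pow_pos hb e).ne' (sum_eq_zero_iff.1 h _ (mem_map_of_mem _ he))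

theorem eq_of_sum_map_pow_eq {b k : ℕ} (hb : 2 ≤ b) {E F : Multiset ℕ}
    (hE : ∀ e ∈ E, e < k) (hF : ∀ e ∈ F, e < k) (hcard : card E + card F ≤ b)
    (h : (E.map (b ^ ·)).sum = (F.map (b ^ ·)).sum) : E = F := by
  have hb0 : 0 < b := by omega
  rcases eq_or_ne E 0 with rfl | hE0
  · exact (eq_zero_of_sum_map_pow_eq_zero hb0 (by simpa using h.symm)).symm
  rcases eq_or_ne F 0 with rfl | hF0
  · exact eq_zero_of_sum_map_pow_eq_zero hb0 (by simpa using h)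
  -- once both sides are nonempty, each has fewer than `b` terms, so all counts are base-`b` digits
  have hEb : card E < b := by have := card_pos.2 hF0; omega
  have hFb : card F < b := by have := card_pos.2 hE0; omega
  rw [sum_map_pow_eq_sum_count_mul_pow hE, sum_map_pow_eq_sum_count_mul_pow hF] at h
  have hdigits := Nat.eq_of_sum_range_mul_pow_eq (by omega)
    (fun i _ => (count_le_card i E).trans_lt hEb) (fun i _ => (count_le_card i F).trans_lt hFb) h
  ext i
  by_cases hi : i < k
  · exact hdigits i hi
  · rw [count_eq_zero_of_notMem fun h => hi (hE i h), count_eq_zero_of_notMem fun h => hi (hF i h)]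

theorem exists_map_eq_of_forall_mem_image {α β : Type*} {f : α → β} {s : Set α}
    {A : Multiset β} (h : ∀ x ∈ A, x ∈ f '' s) :
    ∃ E : Multiset α, (∀ a ∈ E, a ∈ s) ∧ E.map f = A := by
  induction A using Multiset.induction_on with
  | empty => exact ⟨0, by simp⟩
  | cons x A ih =>
    obtain ⟨a, ha, rfl⟩ := h x (mem_cons_self x A)
    obtain ⟨E, hE, rfl⟩ := ih fun y hy => h y (mem_cons_of_mem hy)
    exact ⟨a ::ₘ E, by simpa [ha] using hE, by simp⟩

end Multiset

namespace ZMod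

theorem natCast_pow_injOn_range {t n k : ℕ} (ht : 2 ≤ t) (hk : t ^ k < n) :
    Set.InjOn (fun i => (t : ZMod n) ^ i) (range k) := by
  intro i hi j hj h
  have hlt : ∀ l ∈ (range k : Set ℕ), t ^ l < n := fun l hl =>
    (Nat.pow_lt_pow_right ht (mem_range.1 hl)).trans hk
  refine Nat.pow_right_injective ht (Nat.ModEq.eq_of_lt_of_lt ?_ (hlt i hi) (hlt j hj))
  exact (natCast_eq_natCast_iff _ _ _).1 (by simpa using h)

theorem isTFreeSet_image_pow_range {t n k : ℕ} (ht : 2 ≤ t) (hk : t ^ k < n) :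
    IsTFreeSet t (((range k).image fun i => (t : ZMod n) ^ i : Finset (ZMod n)) :
      Set (ZMod n)) := by
  intro A B hA hB hcard hsum
  rw [coe_image] at hA hB
  obtain ⟨E, hE, rfl⟩ := Multiset.exists_map_eq_of_forall_mem_image hA
  obtain ⟨F, hF, rfl⟩ := Multiset.exists_map_eq_of_forall_mem_image hB
  simp only [mem_coe, mem_range] at hE hF
  simp only [Multiset.card_map] at hcard
  have hsum_lt : ∀ E : Multiset ℕ, (∀ e ∈ E, e < k) → Multiset.card E ≤ t →
      (E.map (t ^ ·)).sum < n := fun E hE hc =>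
    (Multiset.sum_map_pow_le_pow (by omega) hE hc).trans_lt hk
  have hcast : ∀ E : Multiset ℕ,
      (E.map fun i => (t : ZMod n) ^ i).sum = (((E.map (t ^ ·)).sum : ℕ) : ZMod n) := by
    intro E; simp [Nat.cast_multiset_sum, Multiset.map_map]
  rw [hcast, hcast, natCast_eq_natCast_iff] at hsum
  rw [Multiset.eq_of_sum_map_pow_eq ht hE hF hcard
    (hsum.eq_of_lt_of_lt (hsum_lt E hE (by omega)) (hsum_lt F hF (by omega)))]

end ZMod

theorem card_le_sFree {n t : ℕ} [NeZero n] {S : Finset (ZMod n)}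
    (hS : IsTFreeSet t (S : Set (ZMod n))) : S.card ≤ sFree n t :=
  le_csSup ⟨n, by rintro m ⟨T, -, rfl⟩; simpa using T.card_le_univ⟩ ⟨S, hS, rfl⟩

theorem sFree_log_lower_bound (t n : ℕ) (ht : 2 ≤ t) (hn : t < n) :
    Nat.log t (n - 1) ≤ sFree n t := by
  have : NeZero n := ⟨by omega⟩
  have hk : t ^ Nat.log t (n - 1) < n := (Nat.pow_log_le_self t (by omega)).trans_lt (by omega)
  calc Nat.log t (n - 1) = ((range (Nat.log t (n - 1))).image fun i => (t : ZMod n) ^ i).card := by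
        rw [card_image_of_injOn (ZMod.natCast_pow_injOn_range ht hk), card_range]
    _ ≤ sFree n t := card_le_sFree (ZMod.isTFreeSet_image_pow_range ht hk)
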